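/- Let f : {0,1}^n → {0,1} be monotone, let w ≥ 1 be an integer and let c be a real cutoff level. Then the probability that a random walk of length w down the Boolean lattice with cutoff at level c, from a uniform start, starts at a point v with f(v) = 1 and ends at a point u with f(u) = 0 equals the sum, over all influential edges (y, x) of f with h(x) ≥ ⌈c⌉, of the probability that the walk traverses (y, x); in particular, for monotone f the traversal events of distinct influential edges are pairwise disjoint. -/

import Mathlib

/-- Hamming weight of a point of the Boolean lattice `{0,1}^n`. -/
def hw {n : ℕ} (x : Fin n → Bool) : ℕ := (Finset.univ.filter (fun i => x i = true)).card

/-- `bflip x i` is `x` with its `i`-th coordinate flipped. -/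
def bflip {n : ℕ} (x : Fin n → Bool) (i : Fin n) : Fin n → Bool :=
  Function.update x i (!x i)

/-- The position of the walk after `t` steps, when the walk starts at `v` and
successively flips to 0 the coordinates of `v` that equal 1, in the order given by the
linear ordering `σ` of these coordinates. -/
def walkPos {n : ℕ} (v : Fin n → Bool) (σ : Fin (hw v) ≃ {i : Fin n // v i = true})
    (t : ℕ) : Fin n → Bool :=
  fun i => v i && ! decide (∃ s : Fin (hw v), (s : ℕ) < t ∧ (σ s).val = i)

/-- The number of steps performed by a random walk of length `w` down the Boolean
lattice with cutoff at level `c`, when started at `v`: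
`min(w, max(0, h(v) − ⌈c⌉))`. -/
noncomputable def nsteps {n : ℕ} (w : ℕ) (c : ℝ) (v : Fin n → Bool) : ℕ :=
  min w ((hw v : ℤ) - ⌈c⌉).toNat

/-- The probability of an event `P` in the finite probability space of pairs `(v, σ)`,
where `v` is uniform in `{0,1}^n` and `σ` is an independent uniformly random linear
ordering of the coordinates on which `v` equals 1. -/
noncomputable def walkProb {n : ℕ}
    (P : (v : Fin n → Bool) → (Fin (hw v) ≃ {i : Fin n // v i = true}) → Prop) : ℝ :=
  (2 ^ n : ℝ)⁻¹ * ∑ v : Fin n → Bool,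
    (Nat.card {σ : Fin (hw v) ≃ {i : Fin n // v i = true} // P v σ} : ℝ) /
      (Nat.factorial (hw v))

/-- The walk `(v, σ)` (of length `w`, with cutoff at level `c`) traverses the edge
`(y, x)` if at some step it moves from the point `y` to the point `x`. -/
def traverses {n : ℕ} (w : ℕ) (c : ℝ) (y x : Fin n → Bool)
    (v : Fin n → Bool) (σ : Fin (hw v) ≃ {i : Fin n // v i = true}) : Prop :=
  ∃ t : ℕ, t < nsteps w c v ∧ walkPos v σ t = y ∧ walkPos v σ (t + 1) = x

/-- `f` is monotone if `x ≤ y` coordinatewise implies `f(x) ≤ f(y)`. -/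
def MonotoneBF {n : ℕ} (f : (Fin n → Bool) → Bool) : Prop :=
  ∀ x y : Fin n → Bool, (∀ i, x i ≤ y i) → f x ≤ f y


/-!
Along a walk the points decrease coordinatewise, so for monotone `f` the values
`f (walkPos v σ t)` form an antitone Boolean sequence in `t`. Such a sequence drops from
`true` to `false` at most once, and it does so before the end of the walk exactly when
`f v = 1` and `f u = 0`. The drop happens on an influential edge `(y, x)`, which the
cutoff forces to satisfy `h(x) ≥ ⌈c⌉`. Hence the event on the left is the disjoint union of
the traversal events, and summing over `(v, σ)` gives the identity.
-/

lemma Bool.exists_eq_true_and_succ_eq_false (g : ℕ → Bool) {T : ℕ} (h0 : g 0 = true)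
    (hT : g T = false) : ∃ t < T, g t = true ∧ g (t + 1) = false := by
  induction T with
  | zero => simp [h0] at hT
  | succ k ih =>
    cases hk : g k
    · obtain ⟨t, ht, h1, h2⟩ := ih hk
      exact ⟨t, Nat.lt_succ_of_lt ht, h1, h2⟩
    · exact ⟨k, Nat.lt_succ_self k, hk, hT⟩

lemma Antitone.eq_of_eq_true_of_succ_eq_false {g : ℕ → Bool} (hg : Antitone g) {t t' : ℕ}
    (ht : g t = true) (ht1 : g (t + 1) = false) (ht' : g t' = true)
    (ht'1 : g (t' + 1) = false) : t = t' := by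
  by_contra hne
  rcases Nat.lt_or_gt_of_ne hne with h | h
  · have := hg (Nat.succ_le_of_lt h)
    rw [ht', ht1] at this
    exact absurd this (by decide)
  · have := hg (Nat.succ_le_of_lt h)
    rw [ht, ht'1] at this
    exact absurd this (by decide)

lemma hw_update_false {n : ℕ} {x : Fin n → Bool} {i : Fin n} (hx : x i = true) :
    hw (Function.update x i false) = hw x - 1 := by
  have : Finset.univ.filter (fun j => Function.update x i false j = true)
      = (Finset.univ.filter (fun j => x j = true)).erase i := by
    ext j
    by_cases hj : j = i
    · subst hj; simp
    · simp [hj]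
  rw [hw, this, Finset.card_erase_of_mem (by simp [hx]), hw]

lemma bflip_eq_update {n : ℕ} {y : Fin n → Bool} {i : Fin n} (h : y i = true) :
    bflip y i = Function.update y i false := by
  rw [bflip, h]; rfl

lemma bflip_le {n : ℕ} {y : Fin n → Bool} {i : Fin n} (h : y i = true) (j : Fin n) :
    bflip y i j ≤ y j := by
  rw [bflip_eq_update h]
  by_cases hj : j = i
  · subst hj; simp
  · rw [Function.update_of_ne hj]

lemma bflip_injective {n : ℕ} (y : Fin n → Bool) : Function.Injective (bflip y) := by
  intro i j hij
  by_contra hne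
  have := congrFun hij i
  simp [bflip, Function.update_of_ne hne] at this

section walk

variable {n : ℕ} (v : Fin n → Bool) (σ : Fin (hw v) ≃ {i : Fin n // v i = true})

lemma walkPos_zero : walkPos v σ 0 = v := by
  funext i; simp [walkPos]

lemma walkPos_antitone {t t' : ℕ} (h : t ≤ t') (i : Fin n) :
    walkPos v σ t' i ≤ walkPos v σ t i := by
  simp only [walkPos, Bool.le_iff_imp, Bool.and_eq_true, Bool.not_eq_true',
    decide_eq_false_iff_not]
  rintro ⟨hv, hn⟩
  exact ⟨hv, fun ⟨s, hs, he⟩ => hn ⟨s, lt_of_lt_of_le hs h, he⟩⟩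

lemma walkPos_apply_self {t : ℕ} (ht : t < hw v) : walkPos v σ t (σ ⟨t, ht⟩) = true := by
  simp only [walkPos, Bool.and_eq_true, Bool.not_eq_true', decide_eq_false_iff_not]
  refine ⟨(σ ⟨t, ht⟩).property, ?_⟩
  rintro ⟨s, hs, he⟩
  obtain rfl : s = ⟨t, ht⟩ := σ.injective (Subtype.ext he)
  exact lt_irrefl t hs

lemma walkPos_succ {t : ℕ} (ht : t < hw v) :
    walkPos v σ (t + 1) = Function.update (walkPos v σ t) (σ ⟨t, ht⟩) false := by
  funext i
  by_cases hi : i = σ ⟨t, ht⟩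
  · subst hi
    simp only [Function.update_self, walkPos, Bool.and_eq_false_iff, Bool.not_eq_false',
      decide_eq_true_eq]
    exact Or.inr ⟨⟨t, ht⟩, Nat.lt_succ_self t, rfl⟩
  · rw [Function.update_of_ne hi]
    simp only [walkPos]
    congr 3
    refine propext ⟨fun ⟨s, hs, he⟩ => ⟨s, ?_, he⟩, fun ⟨s, hs, he⟩ => ⟨s, by omega, he⟩⟩
    refine lt_of_le_of_ne (Nat.lt_succ_iff.mp hs) fun hst => hi ?_
    rw [← he, show s = ⟨t, ht⟩ from Fin.ext hst]

lemma walkPos_of_hw_le {t : ℕ} (ht : hw v ≤ t) : walkPos v σ t = fun _ => false := by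
  funext i
  by_cases hv : v i = true
  · have hd : decide (∃ s : Fin (hw v), (s : ℕ) < t ∧ (σ s).val = i) = true :=
      decide_eq_true ⟨σ.symm ⟨i, hv⟩, lt_of_lt_of_le (σ.symm ⟨i, hv⟩).isLt ht, by simp⟩
    simp [walkPos, hd]
  · simp [walkPos, hv]

-- For `⌈c⌉ < 0`, `nsteps w c v` can exceed `hw v`; the walk then idles at the bottom point.
lemma lt_hw_of_walkPos_succ_ne {t : ℕ} (h : walkPos v σ (t + 1) ≠ walkPos v σ t) :
    t < hw v := by
  by_contra ht
  exact h ((walkPos_of_hw_le v σ (by omega)).trans (walkPos_of_hw_le v σ (by omega)).symm)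

lemma walkPos_succ_eq_bflip {t : ℕ} (ht : t < hw v) :
    walkPos v σ (t + 1) = bflip (walkPos v σ t) (σ ⟨t, ht⟩) := by
  rw [walkPos_succ v σ ht, bflip_eq_update (walkPos_apply_self v σ ht)]

lemma hw_walkPos {t : ℕ} (ht : t ≤ hw v) : hw (walkPos v σ t) = hw v - t := by
  induction t with
  | zero => rw [walkPos_zero]; rfl
  | succ k ih =>
    rw [walkPos_succ v σ ht, hw_update_false (walkPos_apply_self v σ ht), ih (by omega)]
    omega

lemma MonotoneBF.antitone_walkPos {f : (Fin n → Bool) → Bool} (hf : MonotoneBF f) :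
    Antitone fun t => f (walkPos v σ t) :=
  fun _ _ h => hf _ _ (walkPos_antitone v σ h)

end walk

lemma ceil_le_hw_sub_of_lt_nsteps {n : ℕ} {w : ℕ} {c : ℝ} {v : Fin n → Bool} {t : ℕ}
    (ht : t < nsteps w c v) : ⌈c⌉ ≤ (hw v : ℤ) - (t + 1) := by
  have := min_le_right w ((hw v : ℤ) - ⌈c⌉).toNat
  unfold nsteps at ht
  omega

lemma MonotoneBF.eq_true_and_bflip_eq_false {n : ℕ} {f : (Fin n → Bool) → Bool}
    (hf : MonotoneBF f) {y : Fin n → Bool} {i : Fin n} (hy : y i = true)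
    (hne : f y ≠ f (bflip y i)) : f y = true ∧ f (bflip y i) = false := by
  have := hf _ _ (bflip_le hy)
  revert this hne
  cases f y <;> cases f (bflip y i) <;> simp

section monotone

variable {n : ℕ} {f : (Fin n → Bool) → Bool} (hf : MonotoneBF f) (w : ℕ) (c : ℝ)
  (v : Fin n → Bool) (σ : Fin (hw v) ≃ {i : Fin n // v i = true})
include hf

lemma MonotoneBF.eq_of_traverses {p q : (Fin n → Bool) × Fin n}
    (hp : p.1 p.2 = true) (hpf : f p.1 ≠ f (bflip p.1 p.2))
    (hq : q.1 q.2 = true) (hqf : f q.1 ≠ f (bflip q.1 q.2))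
    (htp : traverses w c p.1 (bflip p.1 p.2) v σ)
    (htq : traverses w c q.1 (bflip q.1 q.2) v σ) : p = q := by
  obtain ⟨y, i⟩ := p
  obtain ⟨t, -, rfl, hx⟩ := htp
  obtain ⟨t', -, hy', hx'⟩ := htq
  obtain ⟨hp1, hp0⟩ := hf.eq_true_and_bflip_eq_false hp hpf
  obtain ⟨hq1, hq0⟩ := hf.eq_true_and_bflip_eq_false hq hqf
  obtain rfl : t = t' := (hf.antitone_walkPos v σ).eq_of_eq_true_of_succ_eq_false hp1
    (by rw [hx, hp0]) (by rw [hy', hq1]) (by rw [hx', hq0])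
  rw [← hy'] at hx'
  exact Prod.ext hy' (bflip_injective _ (hx.symm.trans hx'))

lemma MonotoneBF.ends_one_zero_iff_exists_traverses :
    (f v = true ∧ f (walkPos v σ (nsteps w c v)) = false) ↔
      ∃ p ∈ Finset.univ.filter (fun p : (Fin n → Bool) × Fin n =>
          p.1 p.2 = true ∧ f p.1 ≠ f (bflip p.1 p.2) ∧ ⌈c⌉ ≤ (hw (bflip p.1 p.2) : ℤ)),
        traverses w c p.1 (bflip p.1 p.2) v σ := by
  simp only [Finset.mem_filter, Finset.mem_univ, true_and]
  constructor
  · rintro ⟨hv, hu⟩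
    obtain ⟨t, htT, hft, hft1⟩ := Bool.exists_eq_true_and_succ_eq_false
      (fun t => f (walkPos v σ t)) (by rwa [walkPos_zero]) hu
    have ht : t < hw v := lt_hw_of_walkPos_succ_ne v σ fun h => by simp [h, hft] at hft1
    have hstep := walkPos_succ_eq_bflip v σ ht
    refine ⟨(walkPos v σ t, σ ⟨t, ht⟩), ⟨walkPos_apply_self v σ ht, ?_, ?_⟩,
      t, htT, rfl, hstep⟩
    · simp only [← hstep, hft, hft1, ne_eq, Bool.true_eq_false, not_false_eq_true]
    · rw [← hstep, hw_walkPos v σ ht]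
      have := ceil_le_hw_sub_of_lt_nsteps htT
      omega
  · rintro ⟨p, ⟨hp, hpf, -⟩, t, htT, hy, hx⟩
    obtain ⟨hp1, hp0⟩ := hf.eq_true_and_bflip_eq_false hp hpf
    have hmono := hf.antitone_walkPos v σ
    refine ⟨?_, ?_⟩
    · have := hmono (Nat.zero_le t)
      simp only [walkPos_zero, hy, hp1] at this
      exact Bool.eq_true_of_true_le this
    · have := hmono (show t + 1 ≤ nsteps w c v from htT)
      simp only [hx, hp0] at this
      exact Bool.eq_false_of_le_false this

end monotone

lemma walkProb_eq_sum_of_pairwiseDisjoint {n : ℕ} {ι : Type*} (S : Finset ι)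
    (P : (v : Fin n → Bool) → (Fin (hw v) ≃ {i : Fin n // v i = true}) → Prop)
    (Q : ι → (v : Fin n → Bool) → (Fin (hw v) ≃ {i : Fin n // v i = true}) → Prop)
    (hPQ : ∀ v σ, P v σ ↔ ∃ e ∈ S, Q e v σ)
    (hQ : ∀ v σ, ∀ e ∈ S, ∀ e' ∈ S, Q e v σ → Q e' v σ → e = e') :
    walkProb P = ∑ e ∈ S, walkProb (Q e) := by
  classical
  have hcard : ∀ v, Nat.card {σ // P v σ} = ∑ e ∈ S, Nat.card {σ // Q e v σ} := by
    intro v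
    simp only [Nat.card_eq_fintype_card, Fintype.card_subtype]
    have hunion : Finset.univ.filter (P v) = S.biUnion fun e => Finset.univ.filter (Q e v) := by
      ext σ; simp [hPQ]
    rw [hunion, Finset.card_biUnion]
    intro e he e' he' hne
    exact Finset.disjoint_filter.mpr fun σ _ h h' => hne (hQ v σ e he e' he' h h')
  simp only [walkProb, hcard, Nat.cast_sum, Finset.sum_div, ← Finset.mul_sum]
  rw [Finset.sum_comm]

theorem prob_walk_decomposition_general (n : ℕ) (f : (Fin n → Bool) → Bool)
    (hmono : MonotoneBF f) (w : ℕ) (c : ℝ) :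
    walkProb (fun v σ => f v = true ∧ f (walkPos v σ (nsteps w c v)) = false)
      = ∑ e ∈ Finset.univ.filter (fun p : (Fin n → Bool) × Fin n =>
            p.1 p.2 = true ∧ f p.1 ≠ f (bflip p.1 p.2) ∧
            ⌈c⌉ ≤ (hw (bflip p.1 p.2) : ℤ)),
          walkProb (fun v σ => traverses w c e.1 (bflip e.1 e.2) v σ) ∧
    ∀ p q : (Fin n → Bool) × Fin n,
      p.1 p.2 = true → f p.1 ≠ f (bflip p.1 p.2) →
      q.1 q.2 = true → f q.1 ≠ f (bflip q.1 q.2) → p ≠ q →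
      ∀ (v : Fin n → Bool) (σ : Fin (hw v) ≃ {i : Fin n // v i = true}),
        ¬(traverses w c p.1 (bflip p.1 p.2) v σ ∧
          traverses w c q.1 (bflip q.1 q.2) v σ) := by
  refine ⟨walkProb_eq_sum_of_pairwiseDisjoint _ _ _
      (hmono.ends_one_zero_iff_exists_traverses w c) ?_, ?_⟩
  · intro v σ p hp q hq htp htq
    simp only [Finset.mem_filter] at hp hq
    exact hmono.eq_of_traverses w c v σ hp.2.1 hp.2.2.1 hq.2.1 hq.2.2.1 htp htq
  · exact fun p q hp hpf hq hqf hpq v σ h =>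
      hpq (hmono.eq_of_traverses w c v σ hp hpf hq hqf h.1 h.2)

/-- For monotone `f`, the probability that a random walk of length `w` down the Boolean
lattice with cutoff at level `c` starts at `v` with `f(v) = 1` and ends at `u` with
`f(u) = 0` equals the sum, over all influential edges `(y, x)` of `f` with
`h(x) ≥ ⌈c⌉`, of the probability that the walk traverses `(y, x)`; moreover the
traversal events of distinct influential edges are pairwise disjoint. -/
theorem prob_walk_decomposition (n : ℕ) (f : (Fin n → Bool) → Bool)
    (hmono : MonotoneBF f) (w : ℕ) (hw1 : 1 ≤ w) (c : ℝ) :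
    walkProb (fun v σ => f v = true ∧ f (walkPos v σ (nsteps w c v)) = false)
      = ∑ e ∈ Finset.univ.filter (fun p : (Fin n → Bool) × Fin n =>
            p.1 p.2 = true ∧ f p.1 ≠ f (bflip p.1 p.2) ∧
            ⌈c⌉ ≤ (hw (bflip p.1 p.2) : ℤ)),
          walkProb (fun v σ => traverses w c e.1 (bflip e.1 e.2) v σ) ∧
    ∀ p q : (Fin n → Bool) × Fin n,
      p.1 p.2 = true → f p.1 ≠ f (bflip p.1 p.2) →
      q.1 q.2 = true → f q.1 ≠ f (bflip q.1 q.2) → p ≠ q →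
      ∀ (v : Fin n → Bool) (σ : Fin (hw v) ≃ {i : Fin n // v i = true}),
        ¬(traverses w c p.1 (bflip p.1 p.2) v σ ∧
          traverses w c q.1 (bflip q.1 q.2) v σ) :=
  prob_walk_decomposition_general n f hmono w c
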